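/- arXiv:2603.03285 — 2 statements merged into one kernel-verified Lean document; each statement's English description precedes it below -/
import Mathlib

section
/- Fix a positive integer m. There exists a constant C > 0 such that for every integer r ≥ 1, the ℓ¹ ball count satisfies | |B_m(r)| − (2^m / m!) · r^m | ≤ C · r^{m−1}. Consequently, setting β_m := 2^m/m! and defining the reconstructed radius by r_c(r)^m := |B_m(r)| / β_m, the unified curvature estimator K_h^{(m)}(r) := (6/m) · (r^m − r_c(r)^m) / r^{m+2} satisfies |K_h^{(m)}(r)| ≤ C' / r³ for some constant C' > 0 and all r ≥ 1; in particular K_h^{(m)}(r) → 0 as r → ∞, so the estimator registers flatness on the undeformed lattice. -/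
open Finset

private noncomputable def ballF (m r : ℕ) : Finset (Fin m → ℤ) :=
  (Fintype.piFinset fun _ => Finset.Icc (-(r:ℤ)) r).filter (fun x => ∑ i, (x i).natAbs ≤ r)

private lemma mem_ballF {m r : ℕ} {x : Fin m → ℤ} :
    x ∈ ballF m r ↔ ∑ i, (x i).natAbs ≤ r := by
  simp only [ballF, Finset.mem_filter, Fintype.mem_piFinset, Finset.mem_Icc]
  constructor
  · exact fun h => h.2
  · intro h
    refine ⟨fun i => ?_, h⟩
    have h1 : (x i).natAbs ≤ r :=
      le_trans (Finset.single_le_sum (f := fun i => (x i).natAbs) (fun _ _ => Nat.zero_le _)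
        (Finset.mem_univ i)) h
    have : |x i| ≤ (r : ℤ) := by
      rw [Int.abs_eq_natAbs]; exact_mod_cast h1
    exact abs_le.mp this

private lemma ballF_zero_dim (r : ℕ) : (ballF 0 r).card = 1 := by
  have h : ballF 0 r = {![]} := by
    ext x
    simp only [mem_ballF, Finset.mem_singleton]
    constructor
    · intro _; funext i; exact Fin.elim0 i
    · intro h; simp [h]
  simp [h]

private lemma ballF_zero_rad (m : ℕ) : (ballF m 0).card = 1 := by
  have h : ballF m 0 = {fun _ => 0} := by
    ext x
    simp only [mem_ballF, Nat.le_zero, Finset.sum_eq_zero_iff, Finset.mem_univ, true_implies,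
      Int.natAbs_eq_zero, Finset.mem_singleton, funext_iff]
  simp [h]

private lemma ballF_rec (m r : ℕ) :
    (ballF (m+1) r).card = ∑ j ∈ Finset.Icc (-(r:ℤ)) r, (ballF m (r - j.natAbs)).card := by
  rw [← Finset.card_sigma]
  refine Finset.card_nbij' (fun x => (⟨x 0, Fin.tail x⟩ : Σ _ : ℤ, (Fin m → ℤ)))
    (fun p => Fin.cons p.1 p.2) ?hi ?hj ?li ?ri
  case hi =>
    intro x hx
    simp only [Finset.mem_coe] at hx ⊢
    rw [mem_ballF, Fin.sum_univ_succ] at hx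
    rw [Finset.mem_sigma, Finset.mem_Icc, mem_ballF]
    have h0 : (x 0).natAbs ≤ r := le_trans (Nat.le_add_right _ _) hx
    have habs : |x 0| ≤ (r:ℤ) := by rw [Int.abs_eq_natAbs]; exact_mod_cast h0
    exact ⟨⟨(abs_le.mp habs).1, (abs_le.mp habs).2⟩,
      Nat.le_sub_of_add_le (by simpa [Fin.tail, add_comm] using hx)⟩
  case hj =>
    intro p hp
    simp only [Finset.mem_coe] at hp ⊢
    rw [Finset.mem_sigma, Finset.mem_Icc, mem_ballF] at hp
    obtain ⟨⟨h1, h2⟩, h3⟩ := hp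
    have ha : p.1.natAbs ≤ r := by
      have : |p.1| ≤ (r:ℤ) := abs_le.mpr ⟨h1, h2⟩
      rw [Int.abs_eq_natAbs] at this; exact_mod_cast this
    rw [mem_ballF, Fin.sum_univ_succ]
    simp only [Fin.cons_zero, Fin.cons_succ]
    omega
  case li => intro x _; exact Fin.cons_self_tail x
  case ri =>
    intro p _
    refine Sigma.ext ?_ ?_
    · simp
    · simp [Fin.tail]

private lemma sum_Icc_natAbs (f : ℕ → ℕ) (r : ℕ) :
    ∑ j ∈ Finset.Icc (-(r:ℤ)) r, f j.natAbs = f 0 + 2 * ∑ s ∈ Finset.range r, f (s+1) := by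
  induction r with
  | zero => simp
  | succ r ih =>
    have hset : Finset.Icc (-((r:ℤ)+1)) ((r:ℤ)+1) =
        insert (-(r:ℤ)-1) (insert ((r:ℤ)+1) (Finset.Icc (-(r:ℤ)) r)) := by
      ext j; simp only [Finset.mem_Icc, Finset.mem_insert]; omega
    have h1 : (-(r:ℤ)-1) ∉ insert ((r:ℤ)+1) (Finset.Icc (-(r:ℤ)) r) := by
      simp only [Finset.mem_insert, Finset.mem_Icc]; omega
    have h2 : ((r:ℤ)+1) ∉ Finset.Icc (-(r:ℤ)) r := by
      simp only [Finset.mem_Icc]; omega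
    push_cast
    rw [hset, Finset.sum_insert h1, Finset.sum_insert h2, ih, Finset.sum_range_succ]
    have e1 : (-(r:ℤ)-1).natAbs = r+1 := by omega
    have e2 : ((r:ℤ)+1).natAbs = r+1 := by omega
    rw [e1, e2]; ring

private noncomputable def NB (m r : ℕ) : ℕ := (ballF m r).card

private lemma NB_rec (m r : ℕ) :
    NB (m+1) r = NB m r + 2 * ∑ t ∈ Finset.range r, NB m t := by
  show (ballF (m+1) r).card = _
  rw [ballF_rec]
  rw [show (∑ j ∈ Finset.Icc (-(r:ℤ)) r, (ballF m (r - j.natAbs)).card)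
      = ∑ j ∈ Finset.Icc (-(r:ℤ)) r, (fun s => NB m (r - s)) j.natAbs from rfl]
  rw [sum_Icc_natAbs (fun s => NB m (r - s)) r]
  simp only [Nat.sub_zero]
  congr 1
  congr 1
  have h : ∀ s ∈ Finset.range r, NB m (r - (s+1)) = NB m (r - 1 - s) := by
    intro s _; congr 1; omega
  rw [Finset.sum_congr rfl h, Finset.sum_range_reflect]

private lemma NB_one (r : ℕ) : NB 1 r = 2 * r + 1 := by
  rw [NB_rec]
  have h0 : NB 0 r = 1 := ballF_zero_dim r
  have h1 : ∀ t, NB 0 t = 1 := fun t => ballF_zero_dim t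
  simp [h0, h1]
  ring

private lemma NB_zero_rad (m : ℕ) : NB m 0 = 1 := ballF_zero_rad m

noncomputable def bR (m : ℕ) : ℝ := 2 ^ m / (m.factorial : ℝ)

private lemma bR_pos (m : ℕ) : 0 < bR m := by
  have : (0:ℝ) < (m.factorial : ℝ) := by exact_mod_cast m.factorial_pos
  unfold bR; positivity

private lemma bR_succ (m : ℕ) : bR (m+1) = 2 * bR m / ((m:ℝ)+1) := by
  unfold bR
  rw [Nat.factorial_succ]
  have h1 : ((m.factorial : ℝ)) ≠ 0 := by
    exact_mod_cast m.factorial_pos.ne'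
  have h2 : ((m:ℝ)+1) ≠ 0 := by positivity
  push_cast
  field_simp
  ring

private lemma tele (m t : ℕ) :
    ((m:ℝ)+1) * (t:ℝ)^m ≤ ((t:ℝ)+1)^(m+1) - (t:ℝ)^(m+1) ∧
    ((t:ℝ)+1)^(m+1) - (t:ℝ)^(m+1) ≤ ((m:ℝ)+1) * ((t:ℝ)+1)^m := by
  have key : ((t:ℝ)+1)^(m+1) - (t:ℝ)^(m+1)
      = ∑ i ∈ Finset.range (m+1), ((t:ℝ)+1)^i * (t:ℝ)^(m-i) := by
    have h := geom_sum₂_mul ((t:ℝ)+1) (t:ℝ) (m+1)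
    simp only [add_sub_cancel_left, mul_one] at h
    rw [← h]
    rfl
  constructor
  · rw [key]
    calc ((m:ℝ)+1) * (t:ℝ)^m = ∑ _i ∈ Finset.range (m+1), (t:ℝ)^m := by
          rw [Finset.sum_const, Finset.card_range]; push_cast; ring
    _ ≤ _ := by
        apply Finset.sum_le_sum
        intro i hi
        rw [Finset.mem_range] at hi
        have h : (t:ℝ)^m = (t:ℝ)^i * (t:ℝ)^(m-i) := by
          rw [← pow_add]; congr 1; omega
        rw [h]
        apply mul_le_mul_of_nonneg_right _ (by positivity)
        exact pow_le_pow_left₀ (by positivity) (by linarith) i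
  · rw [key]
    calc ∑ i ∈ Finset.range (m+1), ((t:ℝ)+1)^i * (t:ℝ)^(m-i)
        ≤ ∑ _i ∈ Finset.range (m+1), ((t:ℝ)+1)^m := by
          apply Finset.sum_le_sum
          intro i hi
          rw [Finset.mem_range] at hi
          have h1 : ((t:ℝ)+1)^i * (t:ℝ)^(m-i) ≤ ((t:ℝ)+1)^i * ((t:ℝ)+1)^(m-i) := by
            apply mul_le_mul_of_nonneg_left _ (by positivity)
            exact pow_le_pow_left₀ (by positivity) (by linarith) _
          rw [← pow_add] at h1
          have h2 : i + (m - i) = m := by omega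
          rwa [h2] at h1
    _ = _ := by rw [Finset.sum_const, Finset.card_range]; push_cast; ring

private lemma sum_pow_sandwich (m r : ℕ) :
    |∑ t ∈ Finset.range r, (t:ℝ)^m - (r:ℝ)^(m+1) / ((m:ℝ)+1)| ≤ (r:ℝ)^m := by
  have hm1 : (0:ℝ) < (m:ℝ)+1 := by positivity
  have htele : (r:ℝ)^(m+1) = ∑ t ∈ Finset.range r, (((t:ℝ)+1)^(m+1) - (t:ℝ)^(m+1)) := by
    have h := Finset.sum_range_sub (fun t : ℕ => (t:ℝ)^(m+1)) r
    push_cast at h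
    rw [h]; simp
  have hup : (r:ℝ)^(m+1) ≤ ((m:ℝ)+1) * (∑ t ∈ Finset.range r, (t:ℝ)^m + (r:ℝ)^m) := by
    rw [htele]
    calc ∑ t ∈ Finset.range r, (((t:ℝ)+1)^(m+1) - (t:ℝ)^(m+1))
        ≤ ∑ t ∈ Finset.range r, ((m:ℝ)+1) * ((t:ℝ)+1)^m :=
          Finset.sum_le_sum fun t _ => (tele m t).2
      _ = ((m:ℝ)+1) * ∑ t ∈ Finset.range r, ((t:ℝ)+1)^m := by rw [Finset.mul_sum]
      _ ≤ _ := by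
          apply mul_le_mul_of_nonneg_left _ (le_of_lt hm1)
          have he : ∑ t ∈ Finset.range r, ((t:ℝ)+1)^m
              = ∑ t ∈ Finset.range (r+1), (t:ℝ)^m - 0^m := by
            rw [Finset.sum_range_succ' (fun t : ℕ => (t:ℝ)^m) r]
            push_cast; ring
          rw [he, Finset.sum_range_succ]
          have h0 : (0:ℝ) ≤ (0:ℝ)^m := by positivity
          linarith
  have hlo : ((m:ℝ)+1) * ∑ t ∈ Finset.range r, (t:ℝ)^m ≤ (r:ℝ)^(m+1) := by
    rw [htele, Finset.mul_sum]
    exact Finset.sum_le_sum fun t _ => (tele m t).1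
  have h2 : (r:ℝ)^(m+1)/((m:ℝ)+1) ≤ ∑ t ∈ Finset.range r, (t:ℝ)^m + (r:ℝ)^m := by
    rw [div_le_iff₀ hm1]; nlinarith
  have h3 : ∑ t ∈ Finset.range r, (t:ℝ)^m ≤ (r:ℝ)^(m+1)/((m:ℝ)+1) := by
    rw [le_div_iff₀ hm1]; nlinarith
  rw [abs_le]
  exact ⟨by linarith, by linarith⟩

private lemma est (m : ℕ) : ∃ C > (0:ℝ), ∀ r : ℕ, 1 ≤ r →
    |(NB (m+1) r : ℝ) - bR (m+1) * (r:ℝ)^(m+1)| ≤ C * (r:ℝ)^m := by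
  induction m with
  | zero =>
    refine ⟨1, one_pos, fun r hr => ?_⟩
    have h1 : ((NB 1 r : ℕ) : ℝ) = 2*(r:ℝ)+1 := by rw [NB_one]; push_cast; ring
    have h2 : bR 1 = 2 := by unfold bR; simp [Nat.factorial]
    rw [h1, h2, pow_one, pow_zero]
    have : 2*(r:ℝ)+1 - 2*(r:ℝ) = 1 := by ring
    rw [this]
    norm_num
  | succ k IH =>
    obtain ⟨C, hC, hbound⟩ := IH
    have hb : 0 < bR (k+1) := bR_pos (k+1)
    set b := bR (k+1) with hbdef
    refine ⟨3*b + 3*C + 2, by positivity, fun r hr => ?_⟩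
    have hr1 : (1:ℝ) ≤ (r:ℝ) := by exact_mod_cast hr
    have hr0 : (0:ℝ) < (r:ℝ) := by linarith
    set S : ℝ := ∑ t ∈ Finset.range r, ((NB (k+1) t : ℕ) : ℝ) with hSdef
    set P : ℝ := ∑ t ∈ Finset.range r, (t:ℝ)^(k+1) with hPdef
    have hNB : ((NB (k+2) r : ℕ) : ℝ) = ((NB (k+1) r : ℕ) : ℝ) + 2 * S := by
      rw [show k+2 = (k+1)+1 from rfl, NB_rec]
      push_cast [hSdef]
      ring
    -- A
    have hA : |((NB (k+1) r : ℕ) : ℝ) - b * (r:ℝ)^(k+1)| ≤ C * (r:ℝ)^(k+1) := by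
      refine le_trans (hbound r hr) ?_
      apply mul_le_mul_of_nonneg_left _ (le_of_lt hC)
      exact pow_le_pow_right₀ hr1 (Nat.le_succ k)
    -- B
    have hB : |S - b * P| ≤ (1 + C) * (r:ℝ)^(k+1) := by
      have heq : S - b * P
          = ∑ t ∈ Finset.range r, (((NB (k+1) t : ℕ) : ℝ) - b * (t:ℝ)^(k+1)) := by
        rw [hSdef, hPdef, Finset.mul_sum, ← Finset.sum_sub_distrib]
      rw [heq]
      have hsplit : Finset.range r = insert 0 (Finset.Ico 1 r) := by
        ext t; simp only [Finset.mem_range, Finset.mem_insert, Finset.mem_Ico]; omega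
      have h0nm : (0:ℕ) ∉ Finset.Ico 1 r := by simp
      refine le_trans (Finset.abs_sum_le_sum_abs _ _) ?_
      rw [hsplit, Finset.sum_insert h0nm]
      have hterm0 : |((NB (k+1) 0 : ℕ) : ℝ) - b * (0:ℝ)^(k+1)| = 1 := by
        rw [NB_zero_rad]
        simp [zero_pow (Nat.succ_ne_zero k)]
      have hrest : ∑ t ∈ Finset.Ico 1 r, |((NB (k+1) t : ℕ) : ℝ) - b * (t:ℝ)^(k+1)|
          ≤ C * (r:ℝ)^(k+1) := by
        have hbd : ∀ t ∈ Finset.Ico 1 r,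
            |((NB (k+1) t : ℕ) : ℝ) - b * (t:ℝ)^(k+1)| ≤ C * (r:ℝ)^k := by
          intro t ht
          rw [Finset.mem_Ico] at ht
          refine le_trans (hbound t ht.1) ?_
          apply mul_le_mul_of_nonneg_left _ (le_of_lt hC)
          exact pow_le_pow_left₀ (by positivity) (by exact_mod_cast le_of_lt ht.2) k
        refine le_trans (Finset.sum_le_card_nsmul _ _ _ hbd) ?_
        rw [nsmul_eq_mul, Nat.card_Ico]
        have hcard : ((r - 1 : ℕ) : ℝ) ≤ (r:ℝ) := by
          have : (r - 1 : ℕ) ≤ r := Nat.sub_le r 1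
          exact_mod_cast this
        calc ((r - 1 : ℕ) : ℝ) * (C * (r:ℝ)^k) ≤ (r:ℝ) * (C * (r:ℝ)^k) := by
              apply mul_le_mul_of_nonneg_right hcard (by positivity)
          _ = C * (r:ℝ)^(k+1) := by ring
      have hone : (1:ℝ) ≤ (r:ℝ)^(k+1) := one_le_pow₀ hr1
      push_cast
      push_cast at hterm0 hrest
      rw [hterm0]
      nlinarith [hrest, hone, hC]
    -- D
    have hD : |P - (r:ℝ)^(k+2) / ((k:ℝ)+2)| ≤ (r:ℝ)^(k+1) := by
      have h := sum_pow_sandwich (k+1) r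
      push_cast at h
      convert h using 3 <;> ring
    -- identity
    have hbsucc : bR (k+2) = 2 * b / ((k:ℝ)+2) := by
      rw [hbdef, show k+2 = (k+1)+1 from rfl, bR_succ]
      push_cast; ring
    have hid : ((NB (k+2) r : ℕ) : ℝ) - bR (k+2) * (r:ℝ)^(k+2)
        = (((NB (k+1) r : ℕ) : ℝ) - b * (r:ℝ)^(k+1)) + b * (r:ℝ)^(k+1)
          + 2 * (S - b * P) + 2 * b * (P - (r:ℝ)^(k+2) / ((k:ℝ)+2)) := by
      rw [hNB, hbsucc]; ring
    rw [hid]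
    have habs : |(((NB (k+1) r : ℕ) : ℝ) - b * (r:ℝ)^(k+1)) + b * (r:ℝ)^(k+1)
          + 2 * (S - b * P) + 2 * b * (P - (r:ℝ)^(k+2) / ((k:ℝ)+2))|
        ≤ |((NB (k+1) r : ℕ) : ℝ) - b * (r:ℝ)^(k+1)| + |b * (r:ℝ)^(k+1)|
          + |2 * (S - b * P)| + |2 * b * (P - (r:ℝ)^(k+2) / ((k:ℝ)+2))| := by
      calc _ ≤ |(((NB (k+1) r : ℕ) : ℝ) - b * (r:ℝ)^(k+1)) + b * (r:ℝ)^(k+1)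
              + 2 * (S - b * P)| + |2 * b * (P - (r:ℝ)^(k+2) / ((k:ℝ)+2))| := abs_add_le _ _
        _ ≤ _ := by
            have h1 := abs_add_le ((((NB (k+1) r : ℕ) : ℝ) - b * (r:ℝ)^(k+1)) + b * (r:ℝ)^(k+1))
              (2 * (S - b * P))
            have h2 := abs_add_le (((NB (k+1) r : ℕ) : ℝ) - b * (r:ℝ)^(k+1)) (b * (r:ℝ)^(k+1))
            linarith
    refine le_trans habs ?_
    have e1 : |b * (r:ℝ)^(k+1)| = b * (r:ℝ)^(k+1) := abs_of_pos (by positivity)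
    have e2 : |2 * (S - b * P)| = 2 * |S - b * P| := by
      rw [abs_mul]; norm_num
    have e3 : |2 * b * (P - (r:ℝ)^(k+2) / ((k:ℝ)+2))|
        = 2 * b * |P - (r:ℝ)^(k+2) / ((k:ℝ)+2)| := by
      rw [abs_mul, abs_of_pos (by positivity : (0:ℝ) < 2 * b)]
    rw [e1, e2, e3]
    nlinarith [hA, hB, hD, hb, hC, pow_pos hr0 (k+1)]

private lemma card_bridge (m r : ℕ) :
    Nat.card {x : Fin m → ℤ | ∑ i, (x i).natAbs ≤ r} = NB m r := by
  have h : {x : Fin m → ℤ | ∑ i, (x i).natAbs ≤ r} = ↑(ballF m r) := by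
    ext x
    rw [Set.mem_setOf_eq, Finset.mem_coe, mem_ballF]
  rw [h, Nat.card_coe_set_eq, Set.ncard_coe_finset]
  rfl

/-- Flatness on the undeformed lattice: the ℓ¹ ball count in `ℤ^m` deviates
from its leading term `(2^m/m!) r^m` by at most `C r^{m-1}`, and consequently
the unified curvature estimator with calibration `β_m = 2^m/m!` is `O(r⁻³)`,
registering flatness. -/
theorem l1_flatness_estimator (m : ℕ) (hm : 0 < m) :
    (∃ C > (0 : ℝ), ∀ r : ℕ, 1 ≤ r →
      |(Nat.card {x : Fin m → ℤ | ∑ i, (x i).natAbs ≤ r} : ℝ) -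
        (2 ^ m / m.factorial) * (r : ℝ) ^ m| ≤ C * (r : ℝ) ^ (m - 1)) ∧
    (∃ C' > (0 : ℝ), ∀ r : ℕ, 1 ≤ r →
      |(6 / (m : ℝ)) *
          ((r : ℝ) ^ m -
            (Nat.card {x : Fin m → ℤ | ∑ i, (x i).natAbs ≤ r} : ℝ) /
              (2 ^ m / m.factorial)) / (r : ℝ) ^ (m + 2)| ≤ C' / (r : ℝ) ^ 3) := by
  obtain ⟨k, rfl⟩ : ∃ k, m = k + 1 := ⟨m - 1, by omega⟩
  obtain ⟨C, hC, hbound⟩ := est k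
  have hb : 0 < bR (k+1) := bR_pos (k+1)
  have hbeq : ((2:ℝ) ^ (k+1) / ((k+1).factorial : ℝ)) = bR (k+1) := rfl
  have hm' : (0:ℝ) < ((k:ℝ)+1) := by positivity
  constructor
  · refine ⟨C, hC, fun r hr => ?_⟩
    rw [card_bridge, hbeq]
    simpa using hbound r hr
  · refine ⟨6 * C / (((k:ℝ)+1) * bR (k+1)), by positivity, fun r hr => ?_⟩
    rw [card_bridge, hbeq]
    have hr1 : (1:ℝ) ≤ (r:ℝ) := by exact_mod_cast hr
    have hr0 : (0:ℝ) < (r:ℝ) := by linarith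
    set b := bR (k+1) with hbdef
    set N : ℝ := ((NB (k+1) r : ℕ) : ℝ) with hNdef
    have hkey : |(N:ℝ) - b * (r:ℝ)^(k+1)| ≤ C * (r:ℝ)^k := hbound r hr
    have hfrac : (r:ℝ)^(k+1) - N / b = (b * (r:ℝ)^(k+1) - N) / b := by
      field_simp
    have hcast : ((k+1 : ℕ) : ℝ) = (k:ℝ)+1 := by push_cast; ring
    have hE : |(6 / (((k:ℕ)+1 : ℕ) : ℝ)) * ((r:ℝ)^(k+1) - N / b) / (r:ℝ)^(k+1+2)|
        = (6 / ((k:ℝ)+1)) * (|b * (r:ℝ)^(k+1) - N| / b) / (r:ℝ)^(k+1+2) := by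
      rw [hfrac]
      simp only [abs_div, abs_mul]
      rw [abs_of_pos hb, abs_of_pos (pow_pos hr0 (k+1+2)), hcast, abs_of_pos hm',
        show |(6:ℝ)| = 6 by norm_num]
    rw [hE]
    have hstep : (6 / ((k:ℝ)+1)) * (|b * (r:ℝ)^(k+1) - N| / b) / (r:ℝ)^(k+1+2)
        ≤ (6 / ((k:ℝ)+1)) * ((C * (r:ℝ)^k) / b) / (r:ℝ)^(k+1+2) := by
      have : |b * (r:ℝ)^(k+1) - N| ≤ C * (r:ℝ)^k := by
        rw [abs_sub_comm]; exact hkey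
      gcongr
    refine le_trans hstep (le_of_eq ?_)
    have hpow : (r:ℝ)^(k+1+2) = (r:ℝ)^k * (r:ℝ)^3 := by
      rw [← pow_add]
    have hrk : (r:ℝ)^k ≠ 0 := by positivity
    rw [hpow]
    field_simp
end

section
/- Let (Ω, d_g) be a metric space, X a type equipped with a function d_h : X → X → ℕ satisfying the metric axioms (d_h x y = 0 ↔ x = y, symmetry, triangle inequality), Φ : X → Ω an injective map, and a > 0, c₁, c₂ ≥ 0 constants. Assume the ball inclusions: for every x ∈ X and every natural number r, (i) Φ '' {y : d_h x y ≤ r} ⊆ closedBall_{d_g}(Φ x, a·r + c₂·a), and (ii) closedBall_{d_g}(Φ x, a·r − c₁·a) ⊆ Φ '' {y : d_h x y ≤ r}. Then for all x, y ∈ X, | d_g(Φ x, Φ y) − a · d_h(x, y) | ≤ (c₁ + c₂ + 1) · a. -/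
/-- Metric distortion bound (key step of the measured GH limit): under the
two-sided ball inclusions (H4) between count balls and metric balls, the
realization map satisfies `|d_g(Φx, Φy) − a d_h(x,y)| ≤ (c₁ + c₂ + 1) a`. -/
theorem metric_distortion_of_ball_inclusions {Ω : Type*} [MetricSpace Ω]
    {X : Type*} (d_h : X → X → ℕ)
    (h0 : ∀ x y, d_h x y = 0 ↔ x = y)
    (hsymm : ∀ x y, d_h x y = d_h y x)
    (htri : ∀ x y z, d_h x z ≤ d_h x y + d_h y z)
    (Φ : X → Ω) (hΦ : Function.Injective Φ)
    (a c₁ c₂ : ℝ) (ha : 0 < a) (hc₁ : 0 ≤ c₁) (hc₂ : 0 ≤ c₂)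
    (hball₁ : ∀ x : X, ∀ r : ℕ,
      Φ '' {y : X | d_h x y ≤ r} ⊆ Metric.closedBall (Φ x) (a * r + c₂ * a))
    (hball₂ : ∀ x : X, ∀ r : ℕ,
      Metric.closedBall (Φ x) (a * r - c₁ * a) ⊆ Φ '' {y : X | d_h x y ≤ r}) :
    ∀ x y : X, |dist (Φ x) (Φ y) - a * d_h x y| ≤ (c₁ + c₂ + 1) * a := by
  intro x y
  set n := d_h x y with hn
  -- upper bound: dist ≤ a n + c₂ a
  have hub : dist (Φ x) (Φ y) ≤ a * n + c₂ * a := by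
    have := hball₁ x n ⟨y, by simp [hn], rfl⟩
    simpa [Metric.mem_closedBall, dist_comm] using this
  -- lower bound
  have hlb : a * n - (c₁ + 1) * a ≤ dist (Φ x) (Φ y) := by
    rcases Nat.eq_zero_or_pos n with h | h
    · have : dist (Φ x) (Φ y) = 0 := by
        rw [(h0 x y).mp (hn ▸ h)]
        simp
      rw [this, h]
      push_cast
      nlinarith
    · by_contra hcon
      push_neg at hcon
      have hr : dist (Φ x) (Φ y) ≤ a * (n - 1 : ℕ) - c₁ * a := by
        rw [Nat.cast_sub h]
        push_cast
        nlinarith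
      have := hball₂ x (n - 1) (by rw [Metric.mem_closedBall, dist_comm]; exact hr)
      obtain ⟨z, hz, hzeq⟩ := this
      have : y = z := hΦ hzeq.symm
      subst this
      have : n ≤ n - 1 := hz
      omega
  rw [abs_le]
  constructor <;> nlinarith
end
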